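/- arXiv:1505.06445 — 7 statements merged into one kernel-verified Lean document; each statement's English description precedes it below -/
import Mathlib

section
/- Let A be a local domain with principal maximal ideal m = xA for some nonzero x, and let p = ⋂_{n≥0} m^n. Then p is a prime ideal of A, p = x·p, and every prime ideal of A properly contained in m is contained in p. -/
/-!
Write `m = (x)`. An element lies in `p = ⋂ mⁿ` exactly when it is divisible by every power of `x`,
i.e. when the `x`-adic multiplicity is infinite. Since `m` is maximal, `x` is a prime element, and
finite multiplicities add up under products, so `p` is prime. Any `a ∉ p` factors as `a = xᵏ c`
with `x ∤ c`, i.e. `c ∉ m`; a prime `q ⊊ m` misses `x` and `c`, hence misses every such `a`.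
-/

open IsLocalRing

theorem Ideal.mem_iInf_span_singleton_pow_iff {R : Type*} [CommSemiring R] {x a : R} :
    a ∈ ⨅ n : ℕ, Ideal.span {x} ^ n ↔ ¬FiniteMultiplicity x a := by
  simp only [Submodule.mem_iInf, Ideal.span_singleton_pow, Ideal.mem_span_singleton,
    FiniteMultiplicity.not_iff_forall]

namespace IsLocalRing

variable {A : Type*} [CommRing A] [IsLocalRing A] {x : A}

theorem prime_of_maximalIdeal_eq_span (hx : x ≠ 0) (hm : maximalIdeal A = Ideal.span {x}) :
    Prime x :=
  (Ideal.span_singleton_prime hx).mp (hm ▸ (maximalIdeal.isMaximal A).isPrime)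

theorem isPrime_iInf_pow_maximalIdeal [IsDomain A] (hx : x ≠ 0)
    (hm : maximalIdeal A = Ideal.span {x}) : (⨅ n : ℕ, maximalIdeal A ^ n).IsPrime := by
  have hprime := prime_of_maximalIdeal_eq_span hx hm
  rw [hm]
  refine ⟨fun htop ↦ ?_, fun {a b} hab ↦ ?_⟩
  · have h1 := htop ▸ Submodule.mem_top (x := (1 : A))
    exact Ideal.mem_iInf_span_singleton_pow_iff.mp h1 ⟨0, by simpa using hprime.not_dvd_one⟩
  · simp only [Ideal.mem_iInf_span_singleton_pow_iff] at hab ⊢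
    by_contra! h
    exact hab (hprime.finiteMultiplicity_mul h.1 h.2)

theorem iInf_pow_maximalIdeal_eq_span_mul [IsDomain A] (hx : x ≠ 0)
    (hm : maximalIdeal A = Ideal.span {x}) :
    ⨅ n : ℕ, maximalIdeal A ^ n = Ideal.span {x} * ⨅ n : ℕ, maximalIdeal A ^ n := by
  refine le_antisymm (fun a ha ↦ ?_) Ideal.mul_le_right
  rw [hm, Ideal.mem_iInf_span_singleton_pow_iff, FiniteMultiplicity.not_iff_forall] at ha
  obtain ⟨c, rfl⟩ : x ∣ a := by simpa using ha 1
  have hc : ∀ n : ℕ, x ^ n ∣ c := fun n ↦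
    (mul_dvd_mul_iff_left hx).mp (pow_succ' x n ▸ ha (n + 1))
  refine Ideal.mul_mem_mul (Ideal.mem_span_singleton_self x) ?_
  rwa [hm, Ideal.mem_iInf_span_singleton_pow_iff, FiniteMultiplicity.not_iff_forall]

theorem le_iInf_pow_maximalIdeal_of_lt (hm : maximalIdeal A = Ideal.span {x}) {q : Ideal A}
    (hq : q.IsPrime) (hlt : q < maximalIdeal A) : q ≤ ⨅ n : ℕ, maximalIdeal A ^ n := by
  have hxq : x ∉ q := fun hxq ↦
    hlt.not_ge (hm ▸ (Ideal.span_singleton_le_iff_mem q).mpr hxq)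
  intro a haq
  rw [hm, Ideal.mem_iInf_span_singleton_pow_iff]
  intro hfin
  obtain ⟨c, hac, hxc⟩ := hfin.exists_eq_pow_mul_and_not_dvd
  have hcm : c ∉ maximalIdeal A := by rwa [hm, Ideal.mem_span_singleton]
  rcases hq.mem_or_mem (hac ▸ haq) with h | h
  · exact hxq (hq.mem_of_pow_mem _ h)
  · exact hcm (hlt.le h)

end IsLocalRing

/-- Let A be a local domain with principal maximal ideal m = xA for some nonzero x,
and let p = ⋂_{n≥0} m^n. Then p is a prime ideal of A, p = x·p, and every prime ideal
of A properly contained in m is contained in p. -/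
theorem stmt0 {A : Type*} [CommRing A] [IsDomain A] [IsLocalRing A]
    (x : A) (hx : x ≠ 0)
    (hm : IsLocalRing.maximalIdeal A = Ideal.span {x})
    (p : Ideal A) (hp : p = ⨅ n : ℕ, (IsLocalRing.maximalIdeal A) ^ n) :
    p.IsPrime ∧ p = Ideal.span {x} * p ∧
      ∀ q : Ideal A, q.IsPrime → q < IsLocalRing.maximalIdeal A → q ≤ p := by
  subst hp
  exact ⟨IsLocalRing.isPrime_iInf_pow_maximalIdeal hx hm,
    IsLocalRing.iInf_pow_maximalIdeal_eq_span_mul hx hm,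
    fun q hq hlt ↦ IsLocalRing.le_iInf_pow_maximalIdeal_of_lt hm hq hlt⟩
end

section
/- Let A be a local domain with principal maximal ideal m = xA, x ≠ 0, and let p = ⋂_{n≥0} m^n. Then A is a valuation domain if and only if the localization A_p is a valuation domain. -/
/-!
If `s` lies outside `p = ⋂ mⁿ`, then `s ∉ mⁿ` for some `n`, and peeling off factors of `x`
shows `s` is associated to a power `xᵏ`. Thus a divisibility `b ∣ s * a` reduces to
`b ∣ xᵏ * a`, and writing `b * z = xᵏ * a` either `z` is a unit (so `a ∣ b`) or `z ∈ xA` and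
one factor of `x` cancels. Hence divisibility in `A_p`, which is divisibility in `A` up to
such `s`, is total only if it is total in `A`. The converse holds for any localization, since
every ideal of `A_p` is extended from `A`.
-/

open IsLocalRing

theorem IsLocalization.algebraMap_dvd_algebraMap_iff {R S : Type*} [CommRing R] [CommRing S]
    [Algebra R S] (M : Submonoid R) [IsLocalization M S] {a b : R} :
    algebraMap R S b ∣ algebraMap R S a ↔ ∃ m ∈ M, b ∣ m * a := by
  simp_rw [← Ideal.mem_span_singleton, ← Set.image_singleton, ← Ideal.map_span,
    IsLocalization.algebraMap_mem_map_algebraMap_iff M]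

theorem PreValuationRing.of_isLocalization {R S : Type*} [CommRing R] [CommRing S] [Algebra R S]
    [hR : PreValuationRing R] (M : Submonoid R) [IsLocalization M S] : PreValuationRing S :=
  PreValuationRing.iff_ideal_total.mpr ⟨fun I J => by
    rw [← IsLocalization.map_under M S I, ← IsLocalization.map_under M S J]
    exact ((PreValuationRing.iff_ideal_total.mp hR).total _ _).imp Ideal.map_mono
      Ideal.map_mono⟩

section PrincipalMaximalIdeal

variable {A : Type*} [CommRing A] [IsLocalRing A] {x : A}

theorem IsLocalRing.exists_associated_pow_of_notMem_pow
    (hm : maximalIdeal A = Ideal.span {x}) {n : ℕ} {s : A} (hs : s ∉ maximalIdeal A ^ n) :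
    ∃ k, Associated (x ^ k) s := by
  induction n generalizing s with
  | zero => simp at hs
  | succ n ih =>
    by_cases hsu : IsUnit s
    · exact ⟨0, by simpa using (associated_one_iff_isUnit.mpr hsu).symm⟩
    obtain ⟨t, rfl⟩ := Ideal.mem_span_singleton'.mp (hm ▸ hsu : s ∈ Ideal.span {x})
    have ht : t ∉ maximalIdeal A ^ n := fun ht => hs <| by
      rw [pow_succ]
      exact Ideal.mul_mem_mul ht (hm ▸ Ideal.mem_span_singleton_self x)
    obtain ⟨k, hk⟩ := ih ht
    exact ⟨k + 1, by simpa [pow_succ] using hk.mul_right x⟩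

variable [IsDomain A]

theorem IsLocalRing.dvd_or_dvd_of_dvd_pow_mul (hx : x ≠ 0)
    (hm : maximalIdeal A = Ideal.span {x}) {a b : A} {k : ℕ} (h : b ∣ x ^ k * a) :
    b ∣ a ∨ a ∣ b := by
  induction k with
  | zero => simpa using Or.inl h
  | succ k ih =>
    obtain ⟨z, hz⟩ := h
    by_cases hzu : IsUnit z
    · exact Or.inr (hzu.dvd_mul_right.mp ⟨x ^ (k + 1), by rw [← hz]; ring⟩)
    obtain ⟨w, rfl⟩ := Ideal.mem_span_singleton'.mp (hm ▸ hzu : z ∈ Ideal.span {x})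
    refine ih ⟨w, mul_left_cancel₀ hx ?_⟩
    linear_combination hz

theorem IsLocalRing.dvd_or_dvd_of_dvd_mul_of_notMem_iInf_pow (hx : x ≠ 0)
    (hm : maximalIdeal A = Ideal.span {x}) {s a b : A}
    (hs : s ∉ ⨅ n : ℕ, maximalIdeal A ^ n) (h : b ∣ s * a) : b ∣ a ∨ a ∣ b := by
  obtain ⟨n, hn⟩ := not_forall.mp (mt Ideal.mem_iInf.mpr hs)
  obtain ⟨k, hk⟩ := exists_associated_pow_of_notMem_pow hm hn
  exact dvd_or_dvd_of_dvd_pow_mul hx hm ((hk.mul_right a).dvd_iff_dvd_right.mpr h)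

end PrincipalMaximalIdeal

/-- Let A be a local domain with principal maximal ideal m = xA, x ≠ 0, and let
p = ⋂_{n≥0} m^n. Then A is a valuation domain if and only if A_p is a valuation domain. -/
theorem stmt1 {A : Type*} [CommRing A] [IsDomain A] [IsLocalRing A]
    (x : A) (hx : x ≠ 0)
    (hm : IsLocalRing.maximalIdeal A = Ideal.span {x})
    (p : Ideal A) (hp : p = ⨅ n : ℕ, (IsLocalRing.maximalIdeal A) ^ n)
    [hpp : p.IsPrime] :
    ValuationRing A ↔ ValuationRing (Localization.AtPrime p) := by
  refine ⟨fun _ => ?_, fun _ => ?_⟩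
  · have := PreValuationRing.of_isLocalization (S := Localization.AtPrime p) p.primeCompl
    exact ⟨⟩
  · have dvd_total_of_map_dvd (a b : A) (h : algebraMap A (Localization.AtPrime p) b ∣
        algebraMap A (Localization.AtPrime p) a) : b ∣ a ∨ a ∣ b := by
      obtain ⟨s, hs, hdvd⟩ := (IsLocalization.algebraMap_dvd_algebraMap_iff p.primeCompl).mp h
      exact dvd_or_dvd_of_dvd_mul_of_notMem_iInf_pow hx hm (hp ▸ hs) hdvd
    refine ValuationRing.iff_dvd_total.mpr ⟨fun a b => ?_⟩
    rcases ValuationRing.dvd_total (algebraMap A (Localization.AtPrime p) a)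
      (algebraMap A (Localization.AtPrime p) b) with h | h
    · exact dvd_total_of_map_dvd b a h
    · exact (dvd_total_of_map_dvd a b h).symm
end

section
/- Let V be a valuation domain with fraction field F and let P be a nonzero idempotent prime ideal of V. Then (P :_F P) = V_P, where (P :_F P) = { q ∈ F : qP ⊆ P } and V_P is the localization of V at P. -/
/-!
In a valuation ring every element outside a prime `P` divides every element of `P`, with
quotient again in `P`; hence multiplication by an element of `V_P` maps `P` into itself.
Conversely, if `q ∈ F` is not in `V` then `q⁻¹ = c ∈ V`, and `q P ⊆ P` forces `c ∉ P`,
since otherwise `1 = q c ∈ P`.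
-/

namespace PreValuationRing

variable {V : Type*} [CommRing V] [PreValuationRing V]

theorem dvd_of_mem_of_notMem {I : Ideal V} {p b : V} (hp : p ∈ I) (hb : b ∉ I) : b ∣ p :=
  (ValuationRing.dvd_total b p).resolve_right fun ⟨c, hc⟩ => hb (hc ▸ I.mul_mem_right c hp)

theorem exists_mem_eq_mul_of_mem_of_notMem {P : Ideal V} (hP : P.IsPrime) {p b : V}
    (hp : p ∈ P) (hb : b ∉ P) : ∃ c ∈ P, p = b * c := by
  obtain ⟨c, rfl⟩ := dvd_of_mem_of_notMem hp hb
  exact ⟨c, (hP.mem_or_mem hp).resolve_left hb, rfl⟩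

theorem mul_algebraMap_mem_image_of_mul_algebraMap_eq {F : Type*} [CommSemiring F]
    [Algebra V F] {P : Ideal V} (hP : P.IsPrime) {q : F} {a b : V} (hb : b ∉ P)
    (hab : q * algebraMap V F b = algebraMap V F a) {p : V} (hp : p ∈ P) :
    q * algebraMap V F p ∈ algebraMap V F '' P := by
  obtain ⟨c, hc, rfl⟩ := exists_mem_eq_mul_of_mem_of_notMem hP hp hb
  refine ⟨a * c, P.mul_mem_left a hc, ?_⟩
  rw [map_mul, map_mul, ← mul_assoc, hab]

end PreValuationRing

namespace ValuationRing

variable {V F : Type*} [CommRing V] [IsDomain V] [ValuationRing V]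
  [Field F] [Algebra V F] [IsFractionRing V F]

theorem exists_mul_algebraMap_eq_of_mul_algebraMap_mem_image {P : Ideal V} (hP : P ≠ ⊤)
    {q : F} (hq : ∀ p ∈ P, q * algebraMap V F p ∈ algebraMap V F '' P) :
    ∃ a b : V, b ∉ P ∧ q * algebraMap V F b = algebraMap V F a := by
  have h1 : (1 : V) ∉ P := (Ideal.ne_top_iff_one P).mp hP
  obtain ⟨a, ha⟩ | ⟨c, hc⟩ := isInteger_or_isInteger V q
  · exact ⟨a, 1, h1, by rw [map_one, mul_one, ha]⟩
  obtain rfl | hq0 := eq_or_ne q 0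
  · exact ⟨0, 1, h1, by rw [zero_mul, map_zero]⟩
  have hqc : q * algebraMap V F c = algebraMap V F 1 := by
    rw [hc, map_one, mul_inv_cancel₀ hq0]
  refine ⟨1, c, fun hcP => h1 ?_, hqc⟩
  obtain ⟨p, hp, hpc⟩ := hq c hcP
  rw [hqc, (IsFractionRing.injective V F).eq_iff] at hpc
  exact hpc ▸ hp

end ValuationRing

theorem stmt3_general {V F : Type*} [CommRing V] [IsDomain V] [ValuationRing V]
    [Field F] [Algebra V F] [IsFractionRing V F]
    (P : Ideal V) (hP : P.IsPrime) :
    { q : F | ∀ a ∈ P, q * algebraMap V F a ∈ (algebraMap V F) '' P } =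
      { q : F | ∃ a : V, ∃ b : V, b ∉ P ∧ q * algebraMap V F b = algebraMap V F a } :=
  Set.ext fun _ =>
    ⟨ValuationRing.exists_mul_algebraMap_eq_of_mul_algebraMap_mem_image hP.ne_top,
      fun ⟨_, _, hb, hab⟩ _ hp =>
        PreValuationRing.mul_algebraMap_mem_image_of_mul_algebraMap_eq hP hb hab hp⟩

/-- Let V be a valuation domain with fraction field F and let P be a nonzero idempotent
prime ideal of V. Then (P :_F P) = V_P, where (P :_F P) = { q ∈ F : qP ⊆ P } and V_P is
the localization of V at P (viewed inside F as quotients a/b with a ∈ V, b ∈ V \ P). -/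
theorem stmt3 {V F : Type*} [CommRing V] [IsDomain V] [ValuationRing V]
    [Field F] [Algebra V F] [IsFractionRing V F]
    (P : Ideal V) (hP : P.IsPrime) (hP0 : P ≠ ⊥) (hPid : P * P = P) :
    { q : F | ∀ a ∈ P, q * algebraMap V F a ∈ (algebraMap V F) '' P } =
      { q : F | ∃ a : V, ∃ b : V, b ∉ P ∧ q * algebraMap V F b = algebraMap V F a } :=
  stmt3_general P hP
end

section
/- Let F be a field, V a valuation subring of F, and T a subring of F, and suppose S = V ∩ T is a local ring with maximal ideal N. Let S' be a ring with S ⊆ S' ⊆ T such that N·S' ≠ S'. Then the units of S' contained in S' are exactly recognizable from S: every unit u of S' with u, u^{-1} ∈ S' satisfies u ∈ S or u^{-1} ∈ S, and consequently the group of units of S' equals the group of units of S. -/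
/-! The hypothesis `N·S' ≠ S'` says exactly that `S → S'` is a local homomorphism: a nonunit of
`S` lies in `N`, so it cannot become a unit of `S'`. Hence an element of `S` whose inverse lies
in `S'` already has its inverse in `S`. Since `V` is a valuation ring, one of `u`, `u⁻¹` lies in
`V`, hence in `S`, and so both do. -/

open IsLocalRing

theorem IsLocalRing.isLocalHom_of_map_maximalIdeal_ne_top {R S : Type*} [CommRing R]
    [IsLocalRing R] [Semiring S] {f : R →+* S} (hf : (maximalIdeal R).map f ≠ ⊤) :
    IsLocalHom f where
  map_nonunit a ha := by
    by_contra hna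
    exact hf (Ideal.eq_top_of_isUnit_mem _ (Ideal.mem_map_of_mem f hna) ha)

namespace Subring

variable {K : Type*} [DivisionRing K] {A B : Subring K}

theorem inv_mem_of_isLocalHom_inclusion (hAB : A ≤ B) [IsLocalHom (Subring.inclusion hAB)]
    {u : K} (hu : u ∈ A) (hinv : u⁻¹ ∈ B) : u⁻¹ ∈ A := by
  obtain rfl | hu0 := eq_or_ne u 0
  · simp
  have hunit : IsUnit (Subring.inclusion hAB ⟨u, hu⟩) :=
    (Submonoid.isUnit_iff_of_ne_zero (S := B) hu0).mpr hinv
  exact Submonoid.inv_mem_of_isUnit (isUnit_of_map_unit _ _ hunit)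

theorem mem_and_inv_mem_of_isLocalHom_inclusion (hAB : A ≤ B)
    [IsLocalHom (Subring.inclusion hAB)] {u : K} (hu : u ∈ B) (hinv : u⁻¹ ∈ B)
    (h : u ∈ A ∨ u⁻¹ ∈ A) : u ∈ A ∧ u⁻¹ ∈ A := by
  rcases h with huA | hinvA
  · exact ⟨huA, inv_mem_of_isLocalHom_inclusion hAB huA hinv⟩
  · refine ⟨?_, hinvA⟩
    simpa using inv_mem_of_isLocalHom_inclusion hAB hinvA (by simpa using hu)

end Subring

/-- Let F be a field, V a valuation subring of F, T a subring of F, and suppose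
S = V ∩ T is a local ring with maximal ideal N. Let S' be a ring with S ⊆ S' ⊆ T such
that N·S' ≠ S'. Then every unit u of S' (u, u⁻¹ ∈ S') satisfies u ∈ S and u⁻¹ ∈ S;
in particular the group of units of S' equals the group of units of S. -/
theorem stmt11 {F : Type*} [Field F] (V : ValuationSubring F) (T : Subring F)
    [IsLocalRing ↥(V.toSubring ⊓ T)]
    (S' : Subring F) (hSS' : V.toSubring ⊓ T ≤ S') (hS'T : S' ≤ T)
    (hN : Ideal.map (Subring.inclusion hSS')
        (IsLocalRing.maximalIdeal ↥(V.toSubring ⊓ T)) ≠ ⊤) :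
    ∀ u : F, u ∈ S' → u⁻¹ ∈ S' →
      u ∈ V.toSubring ⊓ T ∧ u⁻¹ ∈ V.toSubring ⊓ T := by
  have := isLocalHom_of_map_maximalIdeal_ne_top hN
  intro u hu hinv
  exact Subring.mem_and_inv_mem_of_isLocalHom_inclusion hSS' hu hinv
    ((V.mem_or_inv_mem u).imp (fun hV ↦ ⟨hV, hS'T hu⟩) (fun hV ↦ ⟨hV, hS'T hinv⟩))
end

section
/- Let F be a field, V a valuation subring of F, T a subring of F, and suppose S = V ∩ T is a local domain with fraction field F. Let y, z ∈ S be nonzero elements such that T = S[1/y] = S[1/z]. Then yS ⊆ zS or zS ⊆ yS. -/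
/-!
Since `V` is a valuation ring, `y / z` or its inverse `z / y` lies in `V`; it also lies in `T`,
which contains `y`, `z` and their inverses. So one of the two quotients lies in `S = V ∩ T`,
and the corresponding principal ideal of `S` contains the other.
-/

theorem Subring.inv_mem_of_eq_closure_union {F : Type*} [Field F] {S T : Subring F} {y : F}
    (hT : T = Subring.closure ((S : Set F) ∪ {y⁻¹})) : y⁻¹ ∈ T :=
  hT ▸ Subring.subset_closure (Or.inr rfl)

theorem Subring.mul_set_subset_of_div_mem {F : Type*} [Field F] {S : Subring F} {y z : F}
    (hz : z ≠ 0) (h : y / z ∈ S) :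
    { q : F | ∃ s ∈ S, q = y * s } ⊆ { q : F | ∃ s ∈ S, q = z * s } := by
  rintro q ⟨s, hs, rfl⟩
  exact ⟨y / z * s, S.mul_mem h hs, by field_simp⟩

theorem div_mem_inf_of_mem_valuationSubring {F : Type*} [Field F] {V : ValuationSubring F}
    {T : Subring F} {y z : F} (hy : y ∈ T) (hz : z⁻¹ ∈ T) (h : y / z ∈ V) :
    y / z ∈ V.toSubring ⊓ T :=
  ⟨h, div_eq_mul_inv y z ▸ T.mul_mem hy hz⟩

theorem stmt12_general {F : Type*} [Field F] (V : ValuationSubring F) (T : Subring F)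
    (y z : F) (hy : y ∈ V.toSubring ⊓ T) (hz : z ∈ V.toSubring ⊓ T)
    (hy0 : y ≠ 0) (hz0 : z ≠ 0)
    (hTy : T = Subring.closure ((V.toSubring ⊓ T : Subring F) ∪ {y⁻¹}))
    (hTz : T = Subring.closure ((V.toSubring ⊓ T : Subring F) ∪ {z⁻¹})) :
    { q : F | ∃ s ∈ V.toSubring ⊓ T, q = y * s } ⊆
        { q : F | ∃ s ∈ V.toSubring ⊓ T, q = z * s } ∨
      { q : F | ∃ s ∈ V.toSubring ⊓ T, q = z * s } ⊆
        { q : F | ∃ s ∈ V.toSubring ⊓ T, q = y * s } := by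
  have hyinv : y⁻¹ ∈ T := Subring.inv_mem_of_eq_closure_union hTy
  have hzinv : z⁻¹ ∈ T := Subring.inv_mem_of_eq_closure_union hTz
  rcases V.mem_or_inv_mem (y / z) with h | h
  · exact Or.inl <| Subring.mul_set_subset_of_div_mem hz0 <|
      div_mem_inf_of_mem_valuationSubring hy.2 hzinv h
  · rw [inv_div] at h
    exact Or.inr <| Subring.mul_set_subset_of_div_mem hy0 <|
      div_mem_inf_of_mem_valuationSubring hz.2 hyinv h

/-- Let F be a field, V a valuation subring of F, T a subring of F, and suppose
S = V ∩ T is a local domain with fraction field F. Let y, z ∈ S be nonzero elements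
such that T = S[1/y] = S[1/z]. Then yS ⊆ zS or zS ⊆ yS. -/
theorem stmt12 {F : Type*} [Field F] (V : ValuationSubring F) (T : Subring F)
    [IsLocalRing ↥(V.toSubring ⊓ T)]
    (hfrac : ∀ q : F, ∃ a b : F, a ∈ V.toSubring ⊓ T ∧ b ∈ V.toSubring ⊓ T ∧
      b ≠ 0 ∧ q * b = a)
    (y z : F) (hy : y ∈ V.toSubring ⊓ T) (hz : z ∈ V.toSubring ⊓ T)
    (hy0 : y ≠ 0) (hz0 : z ≠ 0)
    (hTy : T = Subring.closure ((V.toSubring ⊓ T : Subring F) ∪ {y⁻¹}))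
    (hTz : T = Subring.closure ((V.toSubring ⊓ T : Subring F) ∪ {z⁻¹})) :
    { q : F | ∃ s ∈ V.toSubring ⊓ T, q = y * s } ⊆
        { q : F | ∃ s ∈ V.toSubring ⊓ T, q = z * s } ∨
      { q : F | ∃ s ∈ V.toSubring ⊓ T, q = z * s } ⊆
        { q : F | ∃ s ∈ V.toSubring ⊓ T, q = y * s } :=
  stmt12_general V T y z hy hz hy0 hz0 hTy hTz
end

section
/- Let S be a local domain with maximal ideal N and fraction field F, and let x ∈ N be a nonzero element with N = √(xS). Set T = S[1/x] ⊆ F. If ⋂_{n≥0} x^n S ≠ 0, then (S :_F T) = ⋂_{n≥0} x^n S, so T is a fractional ideal of S; if moreover T is completely integrally closed, then T is the complete integral closure of S. -/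
/-!
Every element of `T = S[1/x]` is `a / xⁿ` with `a ∈ S`, so `q ∈ F` multiplies `T` into `S` exactly
when `q / xⁿ ∈ S` for all `n`, i.e. when `q ∈ ⋂ xⁿS`. A nonzero `c ∈ ⋂ xⁿS` then satisfies
`c θⁿ ∈ S` for every `θ ∈ T`, so `T` lies in the complete integral closure of `S`; conversely an
almost integral element over `S` is almost integral over `T`, hence lies in `T` when `T` is
completely integrally closed.
-/

section

variable {S F : Type*} [CommRing S] [CommRing F] [Algebra S F]

variable (S) in
/-- The colon `(S :_F T)`. -/
def colon (T : Set F) : Set F :=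
  { q : F | ∀ t ∈ T, q * t ∈ Set.range (algebraMap S F) }

theorem exists_mul_pow_mem_range_of_mem_closure {x : S} {y : F}
    (hy : y * algebraMap S F x = 1) {t : F}
    (ht : t ∈ Subring.closure (Set.range (algebraMap S F) ∪ {y})) :
    ∃ n : ℕ, t * algebraMap S F x ^ n ∈ Set.range (algebraMap S F) := by
  induction ht using Subring.closure_induction with
  | mem t ht =>
    rcases ht with ht | rfl
    · exact ⟨0, by simpa using ht⟩
    · exact ⟨1, 1, by simp [hy]⟩
  | zero => exact ⟨0, 0, by simp⟩
  | one => exact ⟨0, 1, by simp⟩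
  | add t u _ _ ht hu =>
    obtain ⟨n, a, ha⟩ := ht
    obtain ⟨m, b, hb⟩ := hu
    refine ⟨n + m, a * x ^ m + b * x ^ n, ?_⟩
    simp only [map_add, map_mul, map_pow, ha, hb]
    ring
  | neg t _ ht =>
    obtain ⟨n, a, ha⟩ := ht
    exact ⟨n, -a, by simp [ha]⟩
  | mul t u _ _ ht hu =>
    obtain ⟨n, a, ha⟩ := ht
    obtain ⟨m, b, hb⟩ := hu
    refine ⟨n + m, a * b, ?_⟩
    simp only [map_mul, ha, hb]
    ring

theorem colon_closure_eq_image_iInf (hinj : Function.Injective (algebraMap S F)) {x : S} {y : F}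
    (hy : y * algebraMap S F x = 1) :
    colon S (Subring.closure (Set.range (algebraMap S F) ∪ {y})) =
      algebraMap S F '' ↑(⨅ n : ℕ, Ideal.span ({x ^ n} : Set S)) := by
  have hyT : y ∈ Subring.closure (Set.range (algebraMap S F) ∪ {y}) :=
    Subring.subset_closure (Or.inr rfl)
  ext q
  simp only [Set.mem_image, SetLike.mem_coe, Submodule.mem_iInf, Ideal.mem_span_singleton]
  constructor
  · intro hq
    obtain ⟨s, hs⟩ := hq 1 (one_mem _)
    rw [mul_one] at hs
    refine ⟨s, fun n => ?_, hs⟩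
    obtain ⟨u, hu⟩ := hq (y ^ n) (pow_mem hyT n)
    refine ⟨u, hinj ?_⟩
    calc algebraMap S F s = q * (y * algebraMap S F x) ^ n := by rw [hy, one_pow, mul_one, hs]
      _ = algebraMap S F (x ^ n * u) := by rw [map_mul, map_pow, hu]; ring
  · rintro ⟨s, hs, rfl⟩ t ht
    obtain ⟨n, a, ha⟩ := exists_mul_pow_mem_range_of_mem_closure hy ht
    obtain ⟨u, rfl⟩ := hs n
    exact ⟨u * a, by rw [map_mul, map_mul, ha, map_pow]; ring⟩

theorem coe_eq_setOf_almostIntegral_of_mem_colon (hinj : Function.Injective (algebraMap S F))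
    {T : Subring F} (hST : Set.range (algebraMap S F) ⊆ T) {c : S} (hc : c ≠ 0)
    (hcT : algebraMap S F c ∈ colon S T)
    (hcic : ∀ θ : F, (∃ c ∈ T, c ≠ 0 ∧ ∀ n : ℕ, c * θ ^ n ∈ T) → θ ∈ T) :
    (T : Set F) = { θ : F | ∃ c : S, c ≠ 0 ∧
      ∀ n : ℕ, algebraMap S F c * θ ^ n ∈ Set.range (algebraMap S F) } := by
  ext θ
  refine ⟨fun hθ => ⟨c, hc, fun n => hcT _ (pow_mem hθ n)⟩, ?_⟩
  rintro ⟨d, hd, hdθ⟩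
  exact hcic θ ⟨algebraMap S F d, hST ⟨d, rfl⟩, (map_ne_zero_iff _ hinj).2 hd,
    fun n => hST (hdθ n)⟩

end

theorem stmt14_general {S F : Type*} [CommRing S]
    [Field F] [Algebra S F] [IsFractionRing S F]
    (x : S) (hx0 : x ≠ 0)
    (T : Subring F)
    (hT : T = Subring.closure (Set.range (algebraMap S F) ∪ {(algebraMap S F x)⁻¹}))
    (hnz : (⨅ n : ℕ, Ideal.span ({x ^ n} : Set S)) ≠ ⊥) :
    { q : F | ∀ t ∈ T, q * t ∈ Set.range (algebraMap S F) } =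
        (algebraMap S F) '' ↑(⨅ n : ℕ, Ideal.span ({x ^ n} : Set S)) ∧
      (∃ c : S, c ≠ 0 ∧ ∀ t ∈ T, algebraMap S F c * t ∈ Set.range (algebraMap S F)) ∧
      ((∀ θ : F, (∃ c ∈ T, c ≠ 0 ∧ ∀ n : ℕ, c * θ ^ n ∈ T) → θ ∈ T) →
        (T : Set F) = { θ : F | ∃ c : S, c ≠ 0 ∧
          ∀ n : ℕ, algebraMap S F c * θ ^ n ∈ Set.range (algebraMap S F) }) := by
  have hinj := IsFractionRing.injective S F
  have hy : (algebraMap S F x)⁻¹ * algebraMap S F x = 1 :=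
    inv_mul_cancel₀ ((map_ne_zero_iff _ hinj).2 hx0)
  have hcolon : colon S (T : Set F) =
      algebraMap S F '' ↑(⨅ n : ℕ, Ideal.span ({x ^ n} : Set S)) := by
    rw [hT]; exact colon_closure_eq_image_iInf hinj hy
  obtain ⟨c, hc, hc0⟩ := Submodule.exists_mem_ne_zero_of_ne_bot hnz
  have hcT : algebraMap S F c ∈ colon S (T : Set F) := by rw [hcolon]; exact ⟨c, hc, rfl⟩
  have hST : Set.range (algebraMap S F) ⊆ T := by
    rw [hT]; exact Set.subset_union_left.trans Subring.subset_closure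
  exact ⟨hcolon, ⟨c, hc0, hcT⟩, coe_eq_setOf_almostIntegral_of_mem_colon hinj hST hc0 hcT⟩

/-- Let S be a local domain with maximal ideal N and fraction field F, and let x ∈ N be
nonzero with N = √(xS). Set T = S[1/x] ⊆ F. If ⋂_{n≥0} x^n S ≠ 0, then
(S :_F T) = ⋂_{n≥0} x^n S, T is a fractional ideal of S, and if moreover T is completely
integrally closed, then T is the complete integral closure of S. -/
theorem stmt14 {S F : Type*} [CommRing S] [IsDomain S] [IsLocalRing S]
    [Field F] [Algebra S F] [IsFractionRing S F]
    (x : S) (hx0 : x ≠ 0) (hxN : x ∈ IsLocalRing.maximalIdeal S)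
    (hrad : (Ideal.span ({x} : Set S)).radical = IsLocalRing.maximalIdeal S)
    (T : Subring F)
    (hT : T = Subring.closure (Set.range (algebraMap S F) ∪ {(algebraMap S F x)⁻¹}))
    (hnz : (⨅ n : ℕ, Ideal.span ({x ^ n} : Set S)) ≠ ⊥) :
    { q : F | ∀ t ∈ T, q * t ∈ Set.range (algebraMap S F) } =
        (algebraMap S F) '' ↑(⨅ n : ℕ, Ideal.span ({x ^ n} : Set S)) ∧
      (∃ c : S, c ≠ 0 ∧ ∀ t ∈ T, algebraMap S F c * t ∈ Set.range (algebraMap S F)) ∧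
      ((∀ θ : F, (∃ c ∈ T, c ≠ 0 ∧ ∀ n : ℕ, c * θ ^ n ∈ T) → θ ∈ T) →
        (T : Set F) = { θ : F | ∃ c : S, c ≠ 0 ∧
          ∀ n : ℕ, algebraMap S F c * θ ^ n ∈ Set.range (algebraMap S F) }) :=
  stmt14_general x hx0 T hT hnz
end

section
/- Let S be a local domain with maximal ideal N and fraction field F such that (N :_F N) equals the complete integral closure S* of S, and suppose S ≠ S*. Then for every θ ∈ S* \ S, one has θ^{-1}S ∩ S = N; consequently, if S is a coherent ring, then N is a finitely generated ideal of S. -/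
/-!
If `θ ∈ (N :_F N)` and `θ ∉ S`, the conductor ideal `(S :_S θ)` contains `N`, since
`θN ⊆ N ⊆ S`, and is proper, since `θ ∉ S`; hence it equals `N`. Writing `θ = a / b`,
multiplication by `a` maps `(S :_S θ)` isomorphically onto `aS ∩ bS`, which is finitely
generated when `S` is coherent.
-/

open IsLocalRing

theorem Submodule.mem_one_colon_singleton {R A : Type*} [CommSemiring R] [CommSemiring A]
    [Algebra R A] {x : A} {r : R} :
    r ∈ (1 : Submodule R A).colon {x} ↔
      x * algebraMap R A r ∈ Set.range (algebraMap R A) := by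
  rw [Submodule.mem_colon_singleton, Submodule.mem_one, Algebra.smul_def, mul_comm]
  rfl

theorem IsLocalRing.one_colon_singleton_eq_maximalIdeal {S F : Type*} [CommRing S]
    [IsLocalRing S] [CommRing F] [Algebra S F] {θ : F}
    (hθ : ∀ m ∈ maximalIdeal S, θ * algebraMap S F m ∈ algebraMap S F '' maximalIdeal S)
    (hθS : θ ∉ Set.range (algebraMap S F)) :
    (1 : Submodule S F).colon {θ} = maximalIdeal S := by
  refine le_antisymm (le_maximalIdeal fun htop => hθS ?_) fun m hm => ?_
  · have h1 : (1 : S) ∈ (1 : Submodule S F).colon {θ} := htop ▸ Submodule.mem_top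
    simpa using Submodule.mem_one_colon_singleton.mp h1
  · obtain ⟨n, -, hn⟩ := hθ m hm
    exact Submodule.mem_one_colon_singleton.mpr ⟨n, hn⟩

theorem IsFractionRing.mem_one_colon_singleton_mk'_iff {S F : Type*} [CommRing S] [CommRing F]
    [Algebra S F] [IsFractionRing S F] (a : S) (b : nonZeroDivisors S) (r : S) :
    r ∈ (1 : Submodule S F).colon {IsLocalization.mk' F a b} ↔ (b : S) ∣ a * r := by
  simp_rw [Submodule.mem_one_colon_singleton, mul_comm _ (algebraMap S F r),
    IsLocalization.mul_mk'_eq_mk'_of_mul, Set.mem_range, eq_comm (a := algebraMap S F _),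
    IsLocalization.mk'_eq_iff_eq_mul, ← map_mul, (IsFractionRing.injective S F).eq_iff,
    mul_comm r a, mul_comm _ (b : S), Dvd.dvd]

theorem IsFractionRing.fg_one_colon_singleton {S F : Type*} [CommRing S] [IsDomain S] [Field F]
    [Algebra S F] [IsFractionRing S F]
    (hcoh : ∀ a b : S, (Ideal.span {a} ⊓ Ideal.span {b}).FG) (θ : F) :
    ((1 : Submodule S F).colon {θ}).FG := by
  obtain ⟨a, b, rfl⟩ := IsLocalization.exists_mk'_eq (nonZeroDivisors S) θ
  rcases eq_or_ne a 0 with rfl | ha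
  · rw [IsLocalization.mk'_zero, Submodule.colon_singleton_zero]
    exact Module.Finite.fg_top
  have hmap : Submodule.map (LinearMap.mulLeft S a)
      ((1 : Submodule S F).colon {IsLocalization.mk' F a b}) =
        Ideal.span {a} ⊓ Ideal.span {(b : S)} := by
    ext x
    simp only [Submodule.mem_map, Ideal.mem_inf, Ideal.mem_span_singleton,
      LinearMap.mulLeft_apply, mem_one_colon_singleton_mk'_iff]
    constructor
    · rintro ⟨s, hs, rfl⟩
      exact ⟨dvd_mul_right a s, hs⟩
    · rintro ⟨⟨s, rfl⟩, hbx⟩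
      exact ⟨s, hbx, rfl⟩
  exact Submodule.fg_of_fg_map_injective _ (mul_right_injective₀ ha) (hmap ▸ hcoh a b)

theorem stmt16_general {S F : Type*} [CommRing S] [IsDomain S] [IsLocalRing S]
    [Field F] [Algebra S F] [IsFractionRing S F]
    (SStar : Set F)
    (hcolon : { q : F | ∀ m ∈ IsLocalRing.maximalIdeal S,
        q * algebraMap S F m ∈ (algebraMap S F) '' (IsLocalRing.maximalIdeal S) } = SStar)
    (hne : SStar ≠ Set.range (algebraMap S F)) :
    (∀ θ ∈ SStar, θ ∉ Set.range (algebraMap S F) →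
        { s : S | θ * algebraMap S F s ∈ Set.range (algebraMap S F) } =
          (IsLocalRing.maximalIdeal S : Set S)) ∧
      ((∀ I J : Ideal S, I.FG → J.FG → (I ⊓ J).FG) →
        (IsLocalRing.maximalIdeal S).FG) := by
  have hconductor : ∀ θ ∈ SStar, θ ∉ Set.range (algebraMap S F) →
      (1 : Submodule S F).colon {θ} = maximalIdeal S := fun θ hθ hθS =>
    one_colon_singleton_eq_maximalIdeal (hcolon.symm ▸ hθ :) hθS
  have hrange : Set.range (algebraMap S F) ⊆ SStar := by
    rintro _ ⟨s, rfl⟩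
    rw [← hcolon]
    exact fun m hm => ⟨s * m, Ideal.mul_mem_left _ s hm, map_mul _ _ _⟩
  refine ⟨fun θ hθ hθS => ?_, fun hcoh => ?_⟩
  · rw [← hconductor θ hθ hθS]
    ext s
    exact Submodule.mem_one_colon_singleton.symm
  · obtain ⟨θ, hθ, hθS⟩ := Set.not_subset.mp fun h => hne (h.antisymm hrange)
    rw [← hconductor θ hθ hθS]
    exact IsFractionRing.fg_one_colon_singleton
      (fun a b => hcoh _ _ (Submodule.fg_span_singleton a) (Submodule.fg_span_singleton b)) θ

/-- Let S be a local domain with maximal ideal N and fraction field F such that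
(N :_F N) equals the complete integral closure S* of S, and S ≠ S*. Then for every
θ ∈ S* \ S one has θ⁻¹S ∩ S = N (i.e. { s ∈ S : θs ∈ S } = N); consequently, if S is
coherent (the intersection of two finitely generated ideals is finitely generated),
then N is a finitely generated ideal of S. -/
theorem stmt16 {S F : Type*} [CommRing S] [IsDomain S] [IsLocalRing S]
    [Field F] [Algebra S F] [IsFractionRing S F]
    (SStar : Set F)
    (hSStar : SStar = { θ : F | ∃ c : S, c ≠ 0 ∧
      ∀ n : ℕ, algebraMap S F c * θ ^ n ∈ Set.range (algebraMap S F) })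
    (hcolon : { q : F | ∀ m ∈ IsLocalRing.maximalIdeal S,
        q * algebraMap S F m ∈ (algebraMap S F) '' (IsLocalRing.maximalIdeal S) } = SStar)
    (hne : SStar ≠ Set.range (algebraMap S F)) :
    (∀ θ ∈ SStar, θ ∉ Set.range (algebraMap S F) →
        { s : S | θ * algebraMap S F s ∈ Set.range (algebraMap S F) } =
          (IsLocalRing.maximalIdeal S : Set S)) ∧
      ((∀ I J : Ideal S, I.FG → J.FG → (I ⊓ J).FG) →
        (IsLocalRing.maximalIdeal S).FG) :=
  stmt16_general SStar hcolon hne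
end
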